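/- arXiv:1103.1057 — 2 statements merged into one kernel-verified Lean document; each statement's English description precedes it below -/
import Mathlib

section
/- Let H = (V, E) be a hypergraph. The set function μ on subsets of E defined by μ(E') = |∪E'| − c(E') for non-empty E' ⊆ E and μ(∅) = 0 is non-decreasing (E₁ ⊆ E₂ implies μ(E₁) ≤ μ(E₂)) and submodular: μ(U) + μ(W) ≥ μ(U∩W) + μ(U∪W) for all subsets U, W ⊆ E. -/
open SimpleGraph Finset
open scoped Classical

noncomputable section

variable {α β : Type} [DecidableEq α] [DecidableEq β]

/-- A hypergraph: a finite set `V` of vertices, a finite (index) set `E` of hyperedges,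
where the hyperedge indexed by `e ∈ E` is the nonempty set `incid e ⊆ V` of its vertices.
(Indexing hyperedges by a type allows multiset multiplicities, as in the paper.) -/
structure Hypergraph' (α β : Type) where
  V : Finset α
  E : Finset β
  incid : β → Finset α
  incid_sub : ∀ e ∈ E, incid e ⊆ V
  incid_nonempty : ∀ e ∈ E, (incid e).Nonempty

/-- The degree (valence) of a vertex in a graph. -/
def degr {W : Type} (T : SimpleGraph W) (x : W) : ℕ := (T.neighborSet x).ncard

/-- Nullity (first Betti number) of a graph: #edges − #vertices + #components. -/
def nullity {W : Type} (G : SimpleGraph W) : ℕ :=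
  G.edgeSet.ncard + Nat.card G.ConnectedComponent - Nat.card W

/-- The result of transferring one unit of valence from `a` to `b`. -/
def transferFun (f : β → ℕ) (a b : β) : β → ℕ :=
  fun x => if x = a then f a - 1 else if x = b then f b + 1 else f x

namespace Hypergraph'

variable (H : Hypergraph' α β)

/-- The bipartite graph associated to a hypergraph: color classes `V` and `E`,
with `v` joined to `e` iff `v ∈ incid e`. -/
def Bip : SimpleGraph (↥H.V ⊕ ↥H.E) :=
  SimpleGraph.fromRel (fun x y =>
    ∃ (v : ↥H.V) (e : ↥H.E), x = Sum.inl v ∧ y = Sum.inr e ∧ (v : α) ∈ H.incid (e : β))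

/-- A spanning tree of the associated bipartite graph. -/
def IsSpanningTree (T : SimpleGraph (↥H.V ⊕ ↥H.E)) : Prop :=
  T ≤ H.Bip ∧ T.IsTree

/-- `T` is a spanning tree of `Bip H` realizing the vector `f` (a function on the
hyperedges, encoded as a function on `β` vanishing off `E`): `T` has degree
`f e + 1` at each hyperedge `e`. -/
def Realizes (T : SimpleGraph (↥H.V ⊕ ↥H.E)) (f : β → ℕ) : Prop :=
  H.IsSpanningTree T ∧ (∀ e, e ∉ H.E → f e = 0) ∧
    ∀ e : ↥H.E, degr T (Sum.inr e) = f (e : β) + 1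

/-- A hypertree is a vector realized by some spanning tree of `Bip H`. -/
def IsHypertree (f : β → ℕ) : Prop := ∃ T, H.Realizes T f

/-- The bipartite graph `Bip H |_{E'}` induced by a subset `E'` of hyperedges:
color classes `∪E'` and `E'`. -/
def BipOn (E' : Finset β) : SimpleGraph (↥(E'.biUnion H.incid) ⊕ ↥E') :=
  SimpleGraph.fromRel (fun x y =>
    ∃ (v : ↥(E'.biUnion H.incid)) (e : ↥E'),
      x = Sum.inl v ∧ y = Sum.inr e ∧ (v : α) ∈ H.incid (e : β))

/-- `c(E')`: the number of connected components of `Bip H |_{E'}`. -/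
def compCount (E' : Finset β) : ℕ := Nat.card (H.BipOn E').ConnectedComponent

/-- `μ(E') = |∪E'| − c(E')` (and `μ(∅) = 0`). -/
def mu (E' : Finset β) : ℤ :=
  ((E'.biUnion H.incid).card : ℤ) - (H.compCount E' : ℤ)

/-- `f` is such that a transfer of valence is possible from `a` to `b`. -/
def TransferPossible (f : β → ℕ) (a b : β) : Prop :=
  0 < f a ∧ H.IsHypertree (transferFun f a b)

/-- `e` is internally active w.r.t. the hypertree `f` and the order `o`. -/
def InternallyActive (o : LinearOrder β) (f : β → ℕ) (e : β) : Prop :=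
  ∀ x ∈ H.E, o.lt x e → ¬ H.TransferPossible f e x

/-- `e` is externally active w.r.t. the hypertree `f` and the order `o`. -/
def ExternallyActive (o : LinearOrder β) (f : β → ℕ) (e : β) : Prop :=
  ∀ x ∈ H.E, o.lt x e → ¬ H.TransferPossible f x e

/-- `ῑ(f)`: the number of internally inactive hyperedges w.r.t. `f`. -/
def intInact (o : LinearOrder β) (f : β → ℕ) : ℕ :=
  (H.E.filter (fun e => ¬ H.InternallyActive o f e)).card

/-- `ε̄(f)`: the number of externally inactive hyperedges w.r.t. `f`. -/
def extInact (o : LinearOrder β) (f : β → ℕ) : ℕ :=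
  (H.E.filter (fun e => ¬ H.ExternallyActive o f e)).card

end Hypergraph'

/-!
Let `Ĝ_U` be the graph on `V ⊕ E` whose edges are the incidences `v ∈ e` with `e ∈ U`. It is
`Bip H|_U` together with `|V \ ∪U| + |E \ U|` isolated vertices, so
`μ(U) = |V| + |E| - |U| - c(Ĝ_U)`. Since `Ĝ_{U ∩ W} = Ĝ_U ⊓ Ĝ_W` and `Ĝ_{U ∪ W} = Ĝ_U ⊔ Ĝ_W`,
submodularity of `μ` is supermodularity of the number of components,
`c(G) + c(G') ≤ c(G ⊓ G') + c(G ⊔ G')`. This follows by adding the edges of `G` one at a time to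
both `G ⊓ G'` and `G'`: an edge that merges two components of the larger graph also merges two
components of the smaller one.
For monotonicity, adding a hyperedge `e ∉ U` joins the vertex `e`, isolated in `Ĝ_U`, to a vertex
of `e`, so `|U| + c(Ĝ_U)` does not increase.
-/

namespace SimpleGraph

variable {X : Type*} {G G' : SimpleGraph X} {u v : X}

lemma Reachable.eq_of_forall_not_adj {x y : X} (hx : ∀ z, ¬G.Adj x z) (h : G.Reachable x y) :
    x = y := by
  obtain ⟨_ | ⟨hadj, _⟩⟩ := h
  · rfl
  · exact (hx _ hadj).elim

lemma Reachable.of_sup_edge {a b : X} (h : (G ⊔ edge u v).Reachable a b) :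
    G.Reachable a b ∨ (G.Reachable a u ∧ G.Reachable v b) ∨
      (G.Reachable a v ∧ G.Reachable u b) := by
  obtain ⟨p⟩ := h
  induction p with
  | nil => exact .inl .rfl
  | cons hadj _ ih =>
    rcases hadj with hG | hE
    · have := hG.reachable
      grind [Reachable.trans]
    · obtain ⟨⟨rfl, rfl⟩ | ⟨rfl, rfl⟩, -⟩ := (edge_adj ..).1 hE <;>
        grind [Reachable.refl, Reachable.trans, Reachable.symm]

lemma card_connectedComponent_sup_edge_of_reachable (h : G.Reachable u v) :
    Nat.card (G ⊔ edge u v).ConnectedComponent = Nat.card G.ConnectedComponent := by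
  refine (Nat.card_eq_of_bijective _ ⟨?_, ConnectedComponent.surjective_map_ofLE le_sup_left⟩).symm
  refine ConnectedComponent.ind₂ fun a b hab => ?_
  simp only [ConnectedComponent.map_mk, ConnectedComponent.eq] at hab ⊢
  rcases hab.of_sup_edge with hab | ⟨h₁, h₂⟩ | ⟨h₁, h₂⟩
  · exact hab
  · exact h₁.trans (h.trans h₂)
  · exact h₁.trans (h.symm.trans h₂)

lemma card_connectedComponent_sup_edge_add_one [Finite X] (h : ¬G.Reachable u v) :
    Nat.card (G ⊔ edge u v).ConnectedComponent + 1 = Nat.card G.ConnectedComponent := by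
  set f := ConnectedComponent.map (Hom.ofLE (le_sup_left : G ≤ G ⊔ edge u v))
  set S := Set.univ \ {G.connectedComponentMk v}
  have hinj : Set.InjOn f S := by
    intro c hc d hd hcd
    induction c using ConnectedComponent.ind with | h a => ?_
    induction d using ConnectedComponent.ind with | h b => ?_
    simp only [S, Set.mem_sdiff, Set.mem_singleton_iff, ConnectedComponent.eq] at hc hd
    simp only [f, ConnectedComponent.map_mk, ConnectedComponent.eq] at hcd ⊢
    rcases hcd.of_sup_edge with hab | ⟨-, h₂⟩ | ⟨h₁, -⟩
    · exact hab
    · exact (hd.2 h₂.symm).elim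
    · exact (hc.2 h₁).elim
  have himage : f '' S = Set.univ := by
    refine Set.eq_univ_of_forall (ConnectedComponent.ind fun a => ?_)
    by_cases ha : G.connectedComponentMk a = G.connectedComponentMk v
    · have huv : (G ⊔ edge u v).Adj u v :=
        .inr <| (edge_adj ..).2 ⟨.inl ⟨rfl, rfl⟩, by rintro rfl; exact h .rfl⟩
      refine ⟨G.connectedComponentMk u, ⟨trivial, fun hu => h (ConnectedComponent.eq.1 hu)⟩, ?_⟩
      simp only [f, ConnectedComponent.map_mk, Hom.coe_ofLE, id, ConnectedComponent.eq] at ha ⊢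
      exact huv.reachable.trans (ha.symm.mono le_sup_left)
    · exact ⟨_, ⟨trivial, ha⟩, rfl⟩
  rw [← Set.ncard_univ, ← himage, hinj.ncard_image,
    Set.ncard_sdiff_singleton_add_one (Set.mem_univ _), Set.ncard_univ]

lemma card_connectedComponent_add_sup_edge_le [Finite X] (hle : G ≤ G') (u v : X) :
    Nat.card G'.ConnectedComponent + Nat.card (G ⊔ edge u v).ConnectedComponent ≤
      Nat.card G.ConnectedComponent + Nat.card (G' ⊔ edge u v).ConnectedComponent := by
  by_cases hG : G.Reachable u v
  · rw [card_connectedComponent_sup_edge_of_reachable hG,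
      card_connectedComponent_sup_edge_of_reachable (hG.mono hle), add_comm]
  · have hG₁ := card_connectedComponent_sup_edge_add_one hG
    by_cases hG' : G'.Reachable u v
    · rw [card_connectedComponent_sup_edge_of_reachable hG']
      omega
    · have hG'₁ := card_connectedComponent_sup_edge_add_one hG'
      omega

lemma card_connectedComponent_add_sup_fromEdgeSet_le [Finite X] (hle : G ≤ G')
    (S : Finset (Sym2 X)) :
    Nat.card G'.ConnectedComponent + Nat.card (G ⊔ fromEdgeSet S).ConnectedComponent ≤
      Nat.card G.ConnectedComponent + Nat.card (G' ⊔ fromEdgeSet S).ConnectedComponent := by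
  induction S using Finset.induction_on with
  | empty => simp [add_comm]
  | insert e S _ ih =>
    induction e with | h u v => ?_
    have hstep := card_connectedComponent_add_sup_edge_le
      (sup_le_sup_right hle (fromEdgeSet (S : Set (Sym2 X)))) u v
    have hedge : fromEdgeSet (insert s(u, v) S : Finset (Sym2 X)) = edge u v ⊔ fromEdgeSet S := by
      rw [Finset.coe_insert, Set.insert_eq, fromEdgeSet_union, edge]
    rw [hedge, sup_comm (edge u v), ← sup_assoc, ← sup_assoc]
    omega

theorem card_connectedComponent_add_le_inf_add_sup [Finite X] (G G' : SimpleGraph X) :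
    Nat.card G.ConnectedComponent + Nat.card G'.ConnectedComponent ≤
      Nat.card (G ⊓ G').ConnectedComponent + Nat.card (G ⊔ G').ConnectedComponent := by
  have h := card_connectedComponent_add_sup_fromEdgeSet_le (inf_le_right : G ⊓ G' ≤ G')
    G.edgeSet.toFinite.toFinset
  rw [Set.Finite.coe_toFinset, fromEdgeSet_edgeSet, sup_eq_right.2 inf_le_left,
    sup_comm G'] at h
  omega

variable {Y : Type*} {F : SimpleGraph Y}

lemma Embedding.exists_eq_reachable_of_reachable (φ : F ↪g G)
    (hiso : ∀ x ∉ Set.range φ, ∀ y, ¬G.Adj x y) {a : Y} {x : X} (h : G.Reachable (φ a) x) :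
    ∃ b, φ b = x ∧ F.Reachable a b := by
  obtain ⟨p⟩ := h
  suffices ∀ {y x : X} (p : G.Walk y x) (a : Y), φ a = y → ∃ b, φ b = x ∧ F.Reachable a b from
    this p a rfl
  intro y x p
  induction p with
  | nil => exact fun a ha => ⟨a, ha, .rfl⟩
  | cons hadj _ ih =>
    rintro a rfl
    obtain ⟨a', rfl⟩ : _ ∈ Set.range φ := by_contra fun h' => hiso _ h' _ hadj.symm
    obtain ⟨b, hb, hr⟩ := ih a' rfl
    exact ⟨b, hb, (φ.map_adj_iff.1 hadj).reachable.trans hr⟩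

theorem card_connectedComponent_add_card_of_embedding [Finite X] (φ : F ↪g G)
    (hiso : ∀ x ∉ Set.range φ, ∀ y, ¬G.Adj x y) :
    Nat.card G.ConnectedComponent + Nat.card Y = Nat.card F.ConnectedComponent + Nat.card X := by
  let ψ : F.ConnectedComponent ⊕ ↥(Set.range φ)ᶜ → G.ConnectedComponent :=
    Sum.elim (ConnectedComponent.map φ.toHom) fun x => G.connectedComponentMk x
  have hψ : Function.Bijective ψ := by
    constructor
    · rintro (c | ⟨x, hx⟩) (d | ⟨y, hy⟩) h
      · induction c using ConnectedComponent.ind with | h a => ?_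
        induction d using ConnectedComponent.ind with | h b => ?_
        obtain ⟨b', hb', hr⟩ := φ.exists_eq_reachable_of_reachable hiso
          (ConnectedComponent.eq.1 h)
        rw [φ.injective hb'] at hr
        exact congrArg Sum.inl (ConnectedComponent.eq.2 hr)
      · induction c using ConnectedComponent.ind with | h a => ?_
        obtain ⟨b, rfl, -⟩ := φ.exists_eq_reachable_of_reachable hiso
          (ConnectedComponent.eq.1 h)
        exact (hy ⟨b, rfl⟩).elim
      · induction d using ConnectedComponent.ind with | h b => ?_
        obtain rfl := (ConnectedComponent.eq.1 h).eq_of_forall_not_adj (hiso x hx)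
        exact (hx ⟨b, rfl⟩).elim
      · obtain rfl := (ConnectedComponent.eq.1 h).eq_of_forall_not_adj (hiso x hx)
        rfl
    · refine ConnectedComponent.ind fun x => ?_
      by_cases hx : x ∈ Set.range φ
      · obtain ⟨a, rfl⟩ := hx
        exact ⟨.inl (F.connectedComponentMk a), rfl⟩
      · exact ⟨.inr ⟨x, hx⟩, rfl⟩
  have : Finite Y := .of_injective φ φ.injective
  have hcompl := Set.ncard_add_ncard_compl (Set.range φ)
  rw [Set.ncard_range_of_injective φ.injective] at hcompl
  rw [← Nat.card_eq_of_bijective ψ hψ, Nat.card_sum, Nat.card_coe_set_eq]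
  omega

variable {A B A' B' : Type*} {r s : A → B → Prop}

def bipartiteOfRel (r : A → B → Prop) : SimpleGraph (A ⊕ B) where
  Adj
    | .inl a, .inr b => r a b
    | .inr b, .inl a => r a b
    | _, _ => False
  symm := ⟨by rintro (a | b) (a' | b') h <;> exact h⟩
  loopless := ⟨by rintro (a | b) h <;> exact h⟩

@[simp] lemma bipartiteOfRel_adj_inl_inr {a : A} {b : B} :
    (bipartiteOfRel r).Adj (.inl a) (.inr b) ↔ r a b := .rfl

@[simp] lemma bipartiteOfRel_adj_inr_inl {a : A} {b : B} :
    (bipartiteOfRel r).Adj (.inr b) (.inl a) ↔ r a b := .rfl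

@[simp] lemma not_bipartiteOfRel_adj_inl_inl {a a' : A} :
    ¬(bipartiteOfRel r).Adj (.inl a) (.inl a') := id

@[simp] lemma not_bipartiteOfRel_adj_inr_inr {b b' : B} :
    ¬(bipartiteOfRel r).Adj (.inr b) (.inr b') := id

lemma bipartiteOfRel_mono (h : ∀ a b, r a b → s a b) : bipartiteOfRel r ≤ bipartiteOfRel s := by
  rintro (a | b) (a' | b') hadj <;> simp_all

lemma bipartiteOfRel_inf :
    bipartiteOfRel (fun a b => r a b ∧ s a b) = bipartiteOfRel r ⊓ bipartiteOfRel s := by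
  ext (a | b) (a' | b') <;> simp

lemma bipartiteOfRel_sup :
    bipartiteOfRel (fun a b => r a b ∨ s a b) = bipartiteOfRel r ⊔ bipartiteOfRel s := by
  ext (a | b) (a' | b') <;> simp

def Embedding.bipartiteOfRel {r' : A' → B' → Prop} (f : A ↪ A') (g : B ↪ B')
    (h : ∀ a b, r' (f a) (g b) ↔ r a b) :
    SimpleGraph.bipartiteOfRel r ↪g SimpleGraph.bipartiteOfRel r' :=
  ⟨f.sumMap g, by rintro (a | b) (a' | b') <;> simp [h]⟩

end SimpleGraph

namespace Hypergraph'

variable (H : Hypergraph' α β)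

omit [DecidableEq β] in
lemma bipOn_eq_bipartiteOfRel (U : Finset β) :
    H.BipOn U = bipartiteOfRel fun (v : ↥(U.biUnion H.incid)) (e : ↥U) => (v : α) ∈ H.incid e := by
  ext (v | e) (v' | e') <;> simp [BipOn, fromRel_adj, -Subtype.exists]

/-- The graph `Ĝ_U` above: `Bip H|_U` padded with isolated vertices to all of `V ⊕ E`, so that the
graphs for different `U` share one vertex type. -/
def spanningBip (U : Finset β) : SimpleGraph (↥H.V ⊕ ↥H.E) :=
  bipartiteOfRel fun v e => (e : β) ∈ U ∧ (v : α) ∈ H.incid e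

omit [DecidableEq β] in
lemma mu_eq_card_sub_card_connectedComponent {U : Finset β} (hU : U ⊆ H.E) :
    H.mu U = #H.V + #H.E - #U - Nat.card (H.spanningBip U).ConnectedComponent := by
  have hV : ∀ v ∈ U.biUnion H.incid, v ∈ H.V := by
    simp only [mem_biUnion]
    rintro v ⟨e, he, hv⟩
    exact H.incid_sub e (hU he) hv
  set f : ↥(U.biUnion H.incid) ↪ ↥H.V := Subtype.impEmbedding _ _ hV
  set g : ↥U ↪ ↥H.E := Subtype.impEmbedding _ _ hU
  have hiso : ∀ x ∉ Set.range (f.sumMap g), ∀ y, ¬(H.spanningBip U).Adj x y := by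
    rintro (v | e) hx (v' | e') hadj <;> simp only [spanningBip, bipartiteOfRel_adj_inl_inr,
      bipartiteOfRel_adj_inr_inl, not_bipartiteOfRel_adj_inl_inl,
      not_bipartiteOfRel_adj_inr_inr] at hadj
    · exact hx ⟨.inl ⟨v, mem_biUnion.2 ⟨e', hadj⟩⟩, rfl⟩
    · exact hx ⟨.inr ⟨e, hadj.1⟩, rfl⟩
  have key : Nat.card (H.spanningBip U).ConnectedComponent + Nat.card (↥(U.biUnion H.incid) ⊕ ↥U)
      = Nat.card (H.BipOn U).ConnectedComponent + Nat.card (↥H.V ⊕ ↥H.E) := by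
    rw [bipOn_eq_bipartiteOfRel]
    exact card_connectedComponent_add_card_of_embedding
      (Embedding.bipartiteOfRel f g fun _ e => and_iff_right e.2) hiso
  simp only [Nat.card_sum, Nat.card_eq_finsetCard] at key
  rw [mu, compCount]
  omega

omit [DecidableEq α] [DecidableEq β] in
lemma spanningBip_mono {U W : Finset β} (h : U ⊆ W) : H.spanningBip U ≤ H.spanningBip W :=
  bipartiteOfRel_mono fun _ _ hr => ⟨h hr.1, hr.2⟩

omit [DecidableEq α] in
lemma spanningBip_inter (U W : Finset β) :
    H.spanningBip (U ∩ W) = H.spanningBip U ⊓ H.spanningBip W := by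
  simp only [spanningBip, ← bipartiteOfRel_inf, mem_inter]
  congr! 3
  tauto

lemma spanningBip_union (U W : Finset β) :
    H.spanningBip (U ∪ W) = H.spanningBip U ⊔ H.spanningBip W := by
  simp only [spanningBip, ← bipartiteOfRel_sup, mem_union]
  congr! 3
  tauto

omit [DecidableEq α] in
lemma card_connectedComponent_spanningBip_insert_add_one_le {U : Finset β} {e : β}
    (he : e ∈ H.E) (heU : e ∉ U) :
    Nat.card (H.spanningBip (insert e U)).ConnectedComponent + 1 ≤
      Nat.card (H.spanningBip U).ConnectedComponent := by
  obtain ⟨v, hv⟩ := H.incid_nonempty e he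
  set x : ↥H.V ⊕ ↥H.E := .inr ⟨e, he⟩
  set y : ↥H.V ⊕ ↥H.E := .inl ⟨v, H.incid_sub e he hv⟩
  have hx : ∀ z, ¬(H.spanningBip U).Adj x z := by
    rintro (z | z) <;> simp [x, spanningBip, heU]
  have hxy : ¬(H.spanningBip U).Reachable x y := fun h =>
    Sum.inr_ne_inl (h.eq_of_forall_not_adj hx)
  have hle : H.spanningBip U ⊔ edge x y ≤ H.spanningBip (insert e U) :=
    sup_le (H.spanningBip_mono (subset_insert e U))
      ((edge_le_iff _).2 (.inr (by simp [x, y, spanningBip, hv])))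
  have h₁ := card_connectedComponent_sup_edge_add_one hxy
  have h₂ := ConnectedComponent.card_le_card_of_le hle
  omega

lemma card_add_card_connectedComponent_spanningBip_le {U W : Finset β} (hUW : U ⊆ W)
    (hW : W ⊆ H.E) :
    #W + Nat.card (H.spanningBip W).ConnectedComponent ≤
      #U + Nat.card (H.spanningBip U).ConnectedComponent := by
  obtain ⟨S, rfl⟩ : ∃ S, W = U ∪ S := ⟨W, (union_eq_right.2 hUW).symm⟩
  clear hUW
  induction S using Finset.induction_on with
  | empty => simp
  | insert e S _ ih =>
    rw [union_insert] at hW ⊢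
    have ih := ih ((subset_insert _ _).trans hW)
    by_cases he : e ∈ U ∪ S
    · rwa [insert_eq_of_mem he]
    · have := H.card_connectedComponent_spanningBip_insert_add_one_le (hW (mem_insert_self _ _)) he
      rw [card_insert_of_notMem he]
      omega

omit [DecidableEq β] in
lemma mu_empty : H.mu ∅ = 0 := by
  have : IsEmpty (↥((∅ : Finset β).biUnion H.incid) ⊕ ↥(∅ : Finset β)) := by
    simp only [biUnion_empty]
    infer_instance
  rw [mu, compCount, Nat.card_of_isEmpty]
  simp

lemma mu_mono {E₁ E₂ : Finset β} (h : E₁ ⊆ E₂) (h₂ : E₂ ⊆ H.E) : H.mu E₁ ≤ H.mu E₂ := by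
  rw [H.mu_eq_card_sub_card_connectedComponent (h.trans h₂),
    H.mu_eq_card_sub_card_connectedComponent h₂]
  have := H.card_add_card_connectedComponent_spanningBip_le h h₂
  omega

lemma mu_inter_add_mu_union_le {U W : Finset β} (hU : U ⊆ H.E) (hW : W ⊆ H.E) :
    H.mu (U ∩ W) + H.mu (U ∪ W) ≤ H.mu U + H.mu W := by
  rw [H.mu_eq_card_sub_card_connectedComponent hU, H.mu_eq_card_sub_card_connectedComponent hW,
    H.mu_eq_card_sub_card_connectedComponent (inter_subset_left.trans hU),
    H.mu_eq_card_sub_card_connectedComponent (union_subset hU hW),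
    spanningBip_inter, spanningBip_union]
  have := card_connectedComponent_add_le_inf_add_sup (H.spanningBip U) (H.spanningBip W)
  have := card_inter_add_card_union U W
  omega

end Hypergraph'

/-- `μ(E') = |∪E'| − c(E')`, `μ(∅) = 0`, is non-decreasing and
submodular on the set of hyperedges. -/
theorem mu_monotone_submodular (H : Hypergraph' α β) :
    H.mu ∅ = 0 ∧
    (∀ E₁ E₂ : Finset β, E₁ ⊆ E₂ → E₂ ⊆ H.E → H.mu E₁ ≤ H.mu E₂) ∧
    (∀ U W : Finset β, U ⊆ H.E → W ⊆ H.E →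
      H.mu (U ∩ W) + H.mu (U ∪ W) ≤ H.mu U + H.mu W) :=
  ⟨H.mu_empty, fun _ _ => H.mu_mono, fun _ _ => H.mu_inter_add_mu_union_le⟩
end
end

section
/- Let H = (V, E) be a hypergraph with Bip H connected. For any non-empty subset E' ⊆ E of hyperedges there exists a hypertree f with Σ_{e∈E'} f(e) = |∪E'| − c(E'). Moreover, if a hypertree f and a non-empty E' ⊆ E satisfy Σ_{e∈E'} f(e) < |∪E'| − c(E'), then f is such that a transfer of valence is possible from some element of E ∖ E' to some element of E'. -/
open SimpleGraph Finset
open scoped Classical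

noncomputable section

variable {α β : Type} [DecidableEq α] [DecidableEq β]

/-!
Write `L` for the subgraph of `Bip H` formed by the edges at hyperedges of `E'`: it is
`Bip H|_{E'}` together with isolated vertices, so `μ(E') = |V| + |E| - |E'| - c(L)`. If a spanning
tree `T` realizes `f`, then `T ⊓ L` is a forest whose edges are counted by the degrees `f e + 1`,
`e ∈ E'`; hence `∑_{E'} f + c(T ⊓ L) = μ(E') + c(L)`. Equality is reached by a spanning tree that
extends a spanning forest of `L` by edges outside `L`. If instead the sum is smaller, some edge
`ve` of `L` joins two components of `T ⊓ L`; the path from `v` to `e` in `T` then uses an edge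
`v'e'` with `e' ∉ E'`, and exchanging `v'e'` for `ve` moves one unit of valence from `e'` to `e`.
-/

namespace SimpleGraph

variable {V W : Type*} {G K : SimpleGraph V} {u v x y : V}

lemma Reachable.of_forall_adj (h : ∀ ⦃a b⦄, G.Adj a b → K.Reachable a b)
    (hxy : G.Reachable x y) : K.Reachable x y := by
  obtain ⟨p⟩ := hxy
  induction p with
  | nil => exact .refl _
  | cons ha _ ih => exact (h ha).trans ih

lemma Reachable.elim_sup_edge (h : (G ⊔ edge u v).Reachable x y) :
    G.Reachable x y ∨ G.Reachable x u ∧ G.Reachable v y ∨ G.Reachable x v ∧ G.Reachable u y := by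
  obtain ⟨p⟩ := h
  induction p with
  | nil => exact .inl (.refl _)
  | @cons a b c hab _ ih =>
    rcases hab with hab | hab
    · have := hab.reachable
      rcases ih with h | h | h
      · exact .inl (this.trans h)
      · exact .inr (.inl ⟨this.trans h.1, h.2⟩)
      · exact .inr (.inr ⟨this.trans h.1, h.2⟩)
    · rcases (edge_adj ..).1 hab with ⟨⟨rfl, rfl⟩ | ⟨rfl, rfl⟩, -⟩ <;>
        rcases ih with h | h | h
      · exact .inr (.inl ⟨.refl _, h⟩)
      · exact .inl (h.1.symm.trans h.2)
      · exact .inl h.2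
      · exact .inr (.inr ⟨.refl _, h⟩)
      · exact .inl h.2
      · exact .inl (h.1.symm.trans h.2)

lemma card_connectedComponent_eq_of_reachable_eq (h : G.Reachable = K.Reachable) :
    Nat.card G.ConnectedComponent = Nat.card K.ConnectedComponent := by
  unfold ConnectedComponent
  rw [h]

lemma exists_adj_not_reachable_of_card_lt {B : SimpleGraph V} (hBG : B ≤ G)
    (h : Nat.card G.ConnectedComponent < Nat.card B.ConnectedComponent) :
    ∃ x y, G.Adj x y ∧ ¬B.Reachable x y := by
  by_contra! hall
  have : B.Reachable = G.Reachable := by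
    ext x y
    exact ⟨fun h => h.mono hBG, fun h => h.of_forall_adj hall⟩
  exact h.ne' (card_connectedComponent_eq_of_reachable_eq this)

lemma card_connectedComponent_sup_edge [Finite V] (h : ¬G.Reachable u v) :
    Nat.card (G ⊔ edge u v).ConnectedComponent + 1 = Nat.card G.ConnectedComponent := by
  set φ := ConnectedComponent.map (Hom.ofLE (le_sup_left : G ≤ G ⊔ edge u v))
  have huv : u ≠ v := by rintro rfl; exact h (.refl _)
  have hvu : φ (G.connectedComponentMk v) = φ (G.connectedComponentMk u) :=
    ConnectedComponent.sound (Adj.reachable (.inr ((edge_adj ..).2 ⟨.inr ⟨rfl, rfl⟩, huv.symm⟩)))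
  have hinj : Set.InjOn φ {G.connectedComponentMk v}ᶜ := by
    intro a ha b hb hab
    induction a using ConnectedComponent.ind with | h x =>
    induction b using ConnectedComponent.ind with | h y =>
    simp only [Set.mem_compl_iff, Set.mem_singleton_iff, ConnectedComponent.eq] at ha hb
    rcases (ConnectedComponent.exact hab).elim_sup_edge with hxy | hxy | hxy
    · exact ConnectedComponent.sound hxy
    · exact absurd hxy.2.symm hb
    · exact absurd hxy.1 ha
  have himage : φ '' {G.connectedComponentMk v}ᶜ = Set.univ := by
    refine Set.eq_univ_of_forall fun c => ?_
    obtain ⟨a, rfl⟩ : ∃ a, φ a = c := ConnectedComponent.surjective_map_ofLE _ c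
    by_cases ha : a = G.connectedComponentMk v
    · refine ⟨G.connectedComponentMk u, by simpa [ConnectedComponent.eq] using h, ?_⟩
      rw [ha, hvu]
    · exact ⟨a, ha, rfl⟩
  rw [← Set.ncard_univ, ← himage, hinj.ncard_image,
    ← Set.ncard_add_ncard_compl {G.connectedComponentMk v}, Set.ncard_singleton, add_comm]

lemma deleteEdges_sup_edge_of_adj (h : G.Adj u v) : G.deleteEdges {s(u, v)} ⊔ edge u v = G := by
  ext a b
  simp only [sup_adj, deleteEdges_adj, edge_adj, Set.mem_singleton_iff, Sym2.eq_iff]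
  constructor
  · rintro (⟨hab, -⟩ | ⟨⟨rfl, rfl⟩ | ⟨rfl, rfl⟩, -⟩)
    exacts [hab, h, h.symm]
  · intro hab
    by_cases he : a = u ∧ b = v ∨ a = v ∧ b = u
    exacts [.inr ⟨he, hab.ne⟩, .inl ⟨hab, he⟩]

lemma card_connectedComponent_bot :
    Nat.card (⊥ : SimpleGraph V).ConnectedComponent = Nat.card V :=
  (Nat.card_congr (Equiv.ofBijective _ ⟨fun _ _ h => reachable_bot.1 (ConnectedComponent.exact h),
    Quot.mk_surjective⟩)).symm

theorem IsAcyclic.ncard_edgeSet_add_card_connectedComponent [Finite V] (hG : G.IsAcyclic) :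
    G.edgeSet.ncard + Nat.card G.ConnectedComponent = Nat.card V := by
  induction hn : G.edgeSet.ncard generalizing G with
  | zero =>
    obtain rfl : G = ⊥ := edgeSet_eq_empty.1 ((Set.ncard_eq_zero).1 hn)
    simp [card_connectedComponent_bot]
  | succ n ih =>
    obtain ⟨e, he⟩ := Set.nonempty_of_ncard_ne_zero (s := G.edgeSet) (by omega)
    induction e using Sym2.ind with | h u v =>
    rw [mem_edgeSet] at he
    have hbridge : ¬(G.deleteEdges {s(u, v)}).Reachable u v :=
      isAcyclic_iff_forall_adj_isBridge.1 hG he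
    have hcard : (G.deleteEdges {s(u, v)}).edgeSet.ncard = n := by
      rw [edgeSet_deleteEdges, Set.ncard_sdiff_singleton_of_mem (G.mem_edgeSet.2 he), hn,
        Nat.add_sub_cancel]
    have hsplit := card_connectedComponent_sup_edge hbridge
    rw [deleteEdges_sup_edge_of_adj he] at hsplit
    have := ih (hG.anti (deleteEdges_le _)) hcard
    omega

lemma Reachable.elim_map (f : V ↪ W) {x y : W} (h : (G.map f).Reachable x y) :
    x = y ∨ ∃ a b, f a = x ∧ f b = y ∧ G.Reachable a b := by
  obtain ⟨p⟩ := h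
  induction p with
  | nil => exact .inl rfl
  | cons hxz _ ih =>
    obtain ⟨a, b, hab, rfl, rfl⟩ := (map_adj f G _ _).1 hxz
    rcases ih with rfl | ⟨b', c, hb', rfl, hbc⟩
    · exact .inr ⟨a, b, rfl, rfl, hab.reachable⟩
    · obtain rfl := f.injective hb'
      exact .inr ⟨a, c, rfl, rfl, hab.reachable.trans hbc⟩

theorem card_connectedComponent_map [Finite W] (f : V ↪ W) (G : SimpleGraph V) :
    Nat.card (G.map f).ConnectedComponent + Nat.card V =
      Nat.card G.ConnectedComponent + Nat.card W := by
  have : Finite V := .of_injective f f.injective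
  let φ : G.ConnectedComponent ⊕ ↥(Set.range f)ᶜ → (G.map f).ConnectedComponent :=
    Sum.elim (ConnectedComponent.map (Embedding.map f G).toHom)
      (fun y => (G.map f).connectedComponentMk y)
  have hinj : φ.Injective := by
    refine Function.Injective.sumElim ?_ ?_ ?_
    · intro a b hab
      induction a using ConnectedComponent.ind with | h x =>
      induction b using ConnectedComponent.ind with | h y =>
      rcases (ConnectedComponent.exact hab).elim_map f with hxy | ⟨a, b, ha, hb, hab⟩
      · exact congrArg _ (f.injective hxy)
      · rw [← f.injective ha, ← f.injective hb]
        exact ConnectedComponent.sound hab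
    · rintro ⟨y, hy⟩ ⟨z, hz⟩ hyz
      rcases (ConnectedComponent.exact hyz).elim_map f with rfl | ⟨a, -, rfl, -⟩
      exacts [rfl, absurd ⟨a, rfl⟩ hy]
    · rintro a ⟨y, hy⟩ hay
      induction a using ConnectedComponent.ind with | h x =>
      rcases (ConnectedComponent.exact hay).elim_map f with rfl | ⟨-, b, -, rfl, -⟩
      exacts [hy ⟨x, rfl⟩, hy ⟨b, rfl⟩]
  have hsurj : φ.Surjective := by
    rintro c
    induction c using ConnectedComponent.ind with | h w =>
    by_cases hw : w ∈ Set.range f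
    · obtain ⟨x, rfl⟩ := hw
      exact ⟨.inl (G.connectedComponentMk x), rfl⟩
    · exact ⟨.inr ⟨w, hw⟩, rfl⟩
  rw [← Nat.card_congr (Equiv.ofBijective φ ⟨hinj, hsurj⟩), Nat.card_sum, add_assoc,
    Nat.card_coe_set_eq, ← Set.ncard_range_of_injective f.injective, add_comm (Set.ncard _),
    Set.ncard_add_ncard_compl]

theorem IsTree.deleteEdges_sup_edge {T : SimpleGraph V} (hT : T.IsTree) {p : T.Walk u v}
    (hp : p.IsPath) (huv : ¬T.Adj u v) {a b : V} (hab : s(a, b) ∈ p.edges) :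
    (T.deleteEdges {s(a, b)} ⊔ edge u v).IsTree := by
  have hnr : ¬(T.deleteEdges {s(a, b)}).Reachable u v := by
    rw [reachable_deleteEdges_iff_exists_walk]
    rintro ⟨q, hq⟩
    have : q.bypass = p :=
      congrArg Subtype.val ((hT.isAcyclic.subsingleton_path u v).elim q.toPath ⟨p, hp⟩)
    exact hq (q.edges_bypass_subset_edges (this ▸ hab))
  have hvu : (T ⊔ edge u v).Adj v u :=
    .inr ((edge_adj ..).2 ⟨.inr ⟨rfl, rfl⟩, fun h => hnr (h ▸ .refl _)⟩)
  have hcycle : (Walk.cons hvu (p.mapLe le_sup_left)).IsCycle :=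
    (Walk.cons_isCycle_iff _ _).2 ⟨hp.mapLe _, by
      simpa using fun h => huv (p.adj_of_mem_edges h).symm⟩
  have hnb : ¬(T ⊔ edge u v).IsBridge s(a, b) := fun hb =>
    hb.notMem_edges_of_isCycle hcycle (by simp [hab])
  have hne : s(u, v) ≠ s(a, b) := fun h =>
    huv (by rw [← mem_edgeSet, h]; exact p.edges_subset_edgeSet hab)
  refine ⟨?_, (hT.isAcyclic.anti (deleteEdges_le _)).sup_edge_of_not_reachable hnr⟩
  have := (hT.connected.mono le_sup_left).connected_delete_edge_of_not_isBridge hnb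
  rwa [deleteEdges_sup, deleteEdges_eq_self (G := edge u v) |>.2
    (by simpa [edgeSet_edge_of_ne hvu.ne.symm] using hne)] at this

end SimpleGraph

section Degree

variable {V : Type} {G : SimpleGraph V} {a b u v x : V}

lemma degr_eq_degree (G : SimpleGraph V) (x : V) [Fintype (G.neighborSet x)] :
    degr G x = G.degree x := by
  rw [degr, Set.ncard_eq_toFinset_card', ← card_neighborFinset_eq_degree, neighborFinset_def]

lemma SimpleGraph.Reachable.degr_pos [Finite V] (huv : u ≠ v) (h : G.Reachable u v) :
    0 < degr G u :=
  (Set.ncard_pos).2 (h.nonempty_neighborSet_left huv)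

lemma degr_deleteEdges_of_ne (G : SimpleGraph V) (ha : x ≠ a) (hb : x ≠ b) :
    degr (G.deleteEdges {s(a, b)}) x = degr G x := by
  unfold degr
  congr 1
  ext y
  simp [ha, hb]

lemma degr_deleteEdges_add_one [Finite V] (h : G.Adj a b) :
    degr (G.deleteEdges {s(a, b)}) b + 1 = degr G b := by
  have : (G.deleteEdges {s(a, b)}).neighborSet b = G.neighborSet b \ {a} := by
    ext y
    simp only [mem_neighborSet, deleteEdges_adj, Set.mem_singleton_iff, Set.mem_sdiff, Sym2.eq_iff]
    grind [Adj.ne]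
  rw [degr, degr, this]
  exact Set.ncard_sdiff_singleton_add_one (h.symm : a ∈ G.neighborSet b)

lemma degr_sup_edge_of_ne (G : SimpleGraph V) (hu : x ≠ u) (hv : x ≠ v) :
    degr (G ⊔ edge u v) x = degr G x := by
  unfold degr
  congr 1
  ext y
  simp [edge_adj, hu, hv]

lemma degr_sup_edge [Finite V] (h : ¬G.Adj u v) (huv : u ≠ v) :
    degr (G ⊔ edge u v) v = degr G v + 1 := by
  unfold degr
  rw [← Set.ncard_insert_of_notMem (fun h' : u ∈ G.neighborSet v => h h'.symm)]
  congr 1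
  ext y
  simp only [mem_neighborSet, sup_adj, edge_adj, Set.mem_insert_iff]
  grind

end Degree

namespace Hypergraph'

variable {α β : Type} (H : Hypergraph' α β) {s : Set β} {E' : Finset β}

def bipRestrict (s : Set β) : SimpleGraph (↥H.V ⊕ ↥H.E) :=
  SimpleGraph.fromRel fun x y =>
    ∃ (v : ↥H.V) (e : ↥H.E), x = .inl v ∧ y = .inr e ∧ (e : β) ∈ s ∧ (v : α) ∈ H.incid e

lemma biUnion_incid_subset [DecidableEq α] (hE' : E' ⊆ H.E) :
    E'.biUnion H.incid ⊆ H.V :=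
  Finset.biUnion_subset.2 fun e he => H.incid_sub e (hE' he)

def inclusion [DecidableEq α] (hE' : E' ⊆ H.E) :
    (↥(E'.biUnion H.incid) ⊕ ↥E') ↪ (↥H.V ⊕ ↥H.E) :=
  .sumMap (Subtype.impEmbedding _ _ fun _ hv => H.biUnion_incid_subset hE' hv)
    (Subtype.impEmbedding _ _ fun _ he => hE' he)

variable {H} {T : SimpleGraph (↥H.V ⊕ ↥H.E)} {f : β → ℕ}

lemma bip_adj {x y : ↥H.V ⊕ ↥H.E} :
    H.Bip.Adj x y ↔ ∃ (v : ↥H.V) (e : ↥H.E), (v : α) ∈ H.incid e ∧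
      (x = .inl v ∧ y = .inr e ∨ x = .inr e ∧ y = .inl v) := by
  rw [Bip, fromRel_adj]
  aesop

lemma bipRestrict_adj {x y : ↥H.V ⊕ ↥H.E} :
    (H.bipRestrict s).Adj x y ↔ ∃ (v : ↥H.V) (e : ↥H.E), (e : β) ∈ s ∧ (v : α) ∈ H.incid e ∧
      (x = .inl v ∧ y = .inr e ∨ x = .inr e ∧ y = .inl v) := by
  rw [bipRestrict, fromRel_adj]
  aesop

lemma bipRestrict_le_bip (s : Set β) : H.bipRestrict s ≤ H.Bip := by
  intro x y h
  obtain ⟨v, e, -, hv, hxy⟩ := bipRestrict_adj.1 h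
  exact bip_adj.2 ⟨v, e, hv, hxy⟩

lemma bip_le_bipRestrict_sup_compl (s : Set β) :
    H.Bip ≤ H.bipRestrict s ⊔ H.bipRestrict sᶜ := by
  intro x y h
  obtain ⟨v, e, hv, hxy⟩ := bip_adj.1 h
  by_cases he : (e : β) ∈ s
  exacts [.inl (bipRestrict_adj.2 ⟨v, e, he, hv, hxy⟩),
    .inr (bipRestrict_adj.2 ⟨v, e, he, hv, hxy⟩)]

lemma bipOn_adj [DecidableEq α] {x y : ↥(E'.biUnion H.incid) ⊕ ↥E'} :
    (H.BipOn E').Adj x y ↔ ∃ (v : ↥(E'.biUnion H.incid)) (e : ↥E'), (v : α) ∈ H.incid e ∧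
      (x = .inl v ∧ y = .inr e ∨ x = .inr e ∧ y = .inl v) := by
  rw [BipOn, fromRel_adj]
  aesop

lemma bipRestrict_eq_map [DecidableEq α] (hE' : E' ⊆ H.E) :
    H.bipRestrict ↑E' = (H.BipOn E').map (H.inclusion hE') := by
  ext x y
  rw [bipRestrict_adj, map_adj]
  constructor
  · rintro ⟨v, e, he, hv, hxy⟩
    have hadj : (H.BipOn E').Adj (.inl ⟨v, Finset.mem_biUnion.2 ⟨e, he, hv⟩⟩) (.inr ⟨e, he⟩) :=
      bipOn_adj.2 ⟨_, _, hv, .inl ⟨rfl, rfl⟩⟩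
    rcases hxy with ⟨rfl, rfl⟩ | ⟨rfl, rfl⟩
    exacts [⟨_, _, hadj, rfl, rfl⟩, ⟨_, _, hadj.symm, rfl, rfl⟩]
  · rintro ⟨a, b, hab, rfl, rfl⟩
    obtain ⟨v, e, hv, hab⟩ := bipOn_adj.1 hab
    refine ⟨⟨v, H.biUnion_incid_subset hE' v.2⟩, ⟨e, hE' e.2⟩, e.2, hv, ?_⟩
    rcases hab with ⟨rfl, rfl⟩ | ⟨rfl, rfl⟩
    exacts [.inl ⟨rfl, rfl⟩, .inr ⟨rfl, rfl⟩]

lemma mu_add_card_add_card_connectedComponent [DecidableEq α] (hE' : E' ⊆ H.E) :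
    H.mu E' + E'.card + Nat.card (H.bipRestrict ↑E').ConnectedComponent =
      Nat.card (↥H.V ⊕ ↥H.E) := by
  have := card_connectedComponent_map (H.inclusion hE') (H.BipOn E')
  rw [← bipRestrict_eq_map, Nat.card_sum, Nat.card_eq_finsetCard, Nat.card_eq_finsetCard] at this
  rw [mu, compCount]
  omega

lemma degr_inf_bipRestrict (hT : T ≤ H.Bip) {e : ↥H.E} (he : (e : β) ∈ s) :
    degr (T ⊓ H.bipRestrict s) (.inr e) = degr T (.inr e) := by
  unfold degr
  congr 1
  ext y
  refine and_iff_left_of_imp fun h => ?_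
  obtain ⟨v, e', hv, ⟨h1, -⟩ | ⟨h1, rfl⟩⟩ := bip_adj.1 (hT h)
  · cases h1
  · cases h1
    exact bipRestrict_adj.2 ⟨v, e, he, hv, .inr ⟨rfl, rfl⟩⟩

lemma sum_degr_inr_eq_ncard_edgeSet {B : SimpleGraph (↥H.V ⊕ ↥H.E)} (hB : B ≤ H.bipRestrict ↑E') :
    ∑ e ∈ E'.subtype (· ∈ H.E), degr B (.inr e) = B.edgeSet.ncard := by
  set S : Finset (↥H.V ⊕ ↥H.E) := (E'.subtype (· ∈ H.E)).map .inr
  have hbip : B.IsBipartiteWith ↑S ↑(Sᶜ) := by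
    refine ⟨by rw [Finset.coe_compl]; exact disjoint_compl_right, fun x y h => ?_⟩
    obtain ⟨v, e, he, -, ⟨rfl, rfl⟩ | ⟨rfl, rfl⟩⟩ := bipRestrict_adj.1 (hB h) <;>
      simpa [S] using he
  have := isBipartiteWith_sum_degrees_eq_card_edges hbip
  simp only [S, Finset.sum_map, Function.Embedding.inr_apply, ← degr_eq_degree] at this
  rw [this, ← coe_edgeFinset, Set.ncard_coe_finset]

theorem Realizes.sum_add_card_connectedComponent [DecidableEq α] (hT : H.Realizes T f)
    (hE' : E' ⊆ H.E) :
    ∑ e ∈ E', (f e : ℤ) + Nat.card (T ⊓ H.bipRestrict ↑E').ConnectedComponent =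
      H.mu E' + Nat.card (H.bipRestrict ↑E').ConnectedComponent := by
  obtain ⟨⟨hTB, hTtree⟩, -, hdeg⟩ := hT
  have hforest := (hTtree.isAcyclic.anti (inf_le_left : T ⊓ H.bipRestrict ↑E' ≤ T)
    ).ncard_edgeSet_add_card_connectedComponent
  have hsum := sum_degr_inr_eq_ncard_edgeSet (inf_le_right : T ⊓ H.bipRestrict ↑E' ≤ _)
  rw [Finset.sum_congr rfl fun e he =>
      (degr_inf_bipRestrict hTB (by simpa using he)).trans (hdeg e), Finset.sum_add_distrib,
    Finset.sum_subtype_of_mem (fun b => f b) hE', Finset.sum_const,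
    Finset.card_subtype, Finset.filter_true_of_mem hE', smul_eq_mul, mul_one] at hsum
  have hmu := mu_add_card_add_card_connectedComponent hE'
  rw [← Nat.cast_sum]
  omega

lemma IsSpanningTree.exists_realizes (hT : H.IsSpanningTree T) :
    ∃ f, H.Realizes T f := by
  refine ⟨fun b => if h : b ∈ H.E then degr T (.inr ⟨b, h⟩) - 1 else 0, hT,
    fun b hb => dif_neg hb, fun e => ?_⟩
  obtain ⟨v, hv⟩ := H.incid_nonempty e e.2
  have := (hT.2.connected.preconnected (.inr e) (.inl ⟨v, H.incid_sub e e.2 hv⟩)).degr_pos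
    Sum.inr_ne_inl
  simp only [dif_pos e.2]
  exact (Nat.sub_add_cancel this).symm

theorem exists_isSpanningTree_reachable_inf_eq (hconn : H.Bip.Connected) (s : Set β) :
    ∃ T, H.IsSpanningTree T ∧
      (T ⊓ H.bipRestrict s).Reachable = (H.bipRestrict s).Reachable := by
  obtain ⟨F, hFL, hF, hFreach⟩ := (H.bipRestrict s).exists_isAcyclic_reachable_eq_le
  have := hconn.nonempty
  have hM : (F ⊔ H.bipRestrict sᶜ).Connected := by
    refine ⟨fun x y => (hconn.preconnected x y).of_forall_adj fun a b hab => ?_⟩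
    rcases bip_le_bipRestrict_sup_compl s hab with h | h
    · exact (hFreach ▸ h.reachable : F.Reachable a b).mono le_sup_left
    · exact h.reachable.mono le_sup_right
  obtain ⟨T, hFT, hTM, hT⟩ := hM.exists_isTree_le_of_le_of_isAcyclic le_sup_left hF
  have hTB : T ≤ H.Bip :=
    hTM.trans (sup_le (hFL.trans (bipRestrict_le_bip s)) (bipRestrict_le_bip _))
  refine ⟨T, ⟨hTB, hT⟩, ?_⟩
  ext x y
  exact ⟨fun h => h.mono inf_le_right,
    fun h => (hFreach ▸ h : F.Reachable x y).mono (le_inf hFT hFL)⟩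

lemma exists_mem_edges_of_not_reachable (hT : T ≤ H.Bip) {x y : ↥H.V ⊕ ↥H.E} (p : T.Walk x y)
    (h : ¬(T ⊓ H.bipRestrict s).Reachable x y) :
    ∃ (v : ↥H.V) (e : ↥H.E), (e : β) ∉ s ∧ s(.inl v, .inr e) ∈ p.edges := by
  by_contra! hall
  refine h ⟨p.transfer _ fun d hd => ?_⟩
  induction d using Sym2.ind with | h a b =>
  have hab := p.adj_of_mem_edges hd
  refine ⟨hab, bipRestrict_adj.2 ?_⟩
  obtain ⟨v, e, hv, ⟨rfl, rfl⟩ | ⟨rfl, rfl⟩⟩ := bip_adj.1 (hT hab)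
  · exact ⟨v, e, not_not.1 fun he => hall v e he hd, hv, .inl ⟨rfl, rfl⟩⟩
  · exact ⟨v, e, not_not.1 fun he => hall v e he (Sym2.eq_swap ▸ hd), hv, .inr ⟨rfl, rfl⟩⟩

theorem Realizes.transferPossible_of_mem_edges [DecidableEq β] (hT : H.Realizes T f)
    {v : ↥H.V} {e : ↥H.E} (hv : (v : α) ∈ H.incid e) (hnadj : ¬T.Adj (.inl v) (.inr e))
    {p : T.Walk (.inl v) (.inr e)} (hp : p.IsPath) {v' : ↥H.V} {e' : ↥H.E} (hee' : e ≠ e')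
    (hmem : s(.inl v', .inr e') ∈ p.edges) :
    H.TransferPossible f e' e := by
  obtain ⟨⟨hTB, hT⟩, hf0, hdeg⟩ := hT
  set T' := T.deleteEdges {s(.inl v', .inr e')} ⊔ edge (.inl v) (.inr e)
  have hT' : T'.IsTree := hT.deleteEdges_sup_edge hp hnadj hmem
  have hT'B : T' ≤ H.Bip := sup_le ((deleteEdges_le _).trans hTB)
    ((edge_le_iff _).2 (.inr (bip_adj.2 ⟨v, e, hv, .inl ⟨rfl, rfl⟩⟩)))
  have hdeg_e' : degr T' (.inr e') = f e' := by
    have := degr_deleteEdges_add_one (p.adj_of_mem_edges hmem)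
    rw [hdeg] at this
    rw [degr_sup_edge_of_ne _ Sum.inr_ne_inl (by simpa using hee'.symm)]
    omega
  have hdeg_e : degr T' (.inr e) = f e + 1 + 1 := by
    rw [degr_sup_edge (fun h => hnadj (deleteEdges_le _ h)) Sum.inl_ne_inr,
      degr_deleteEdges_of_ne _ Sum.inr_ne_inl (by simpa using hee'), hdeg]
  have hdeg_other (c : ↥H.E) (hce : c ≠ e) (hce' : c ≠ e') : degr T' (.inr c) = f c + 1 := by
    rw [degr_sup_edge_of_ne _ Sum.inr_ne_inl (by simpa using hce),
      degr_deleteEdges_of_ne _ Sum.inr_ne_inl (by simpa using hce'), hdeg]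
  have hpos : 0 < f e' :=
    hdeg_e' ▸ (hT'.connected.preconnected _ (.inl v)).degr_pos Sum.inr_ne_inl
  refine ⟨hpos, T', ⟨hT'B, hT'⟩, fun b hb => ?_, fun c => ?_⟩
  · have h1 : b ≠ e' := fun h => hb (h ▸ e'.2)
    have h2 : b ≠ e := fun h => hb (h ▸ e.2)
    simp [transferFun, h1, h2, hf0 b hb]
  · rcases eq_or_ne c e' with rfl | hce'
    · simp only [transferFun, ↓reduceIte, hdeg_e']
      omega
    rcases eq_or_ne c e with rfl | hce
    · simp [transferFun, Subtype.coe_ne_coe.2 hee', hdeg_e]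
    · simp [transferFun, Subtype.coe_ne_coe.2 hce, Subtype.coe_ne_coe.2 hce',
        hdeg_other c hce hce']

theorem Realizes.exists_transferPossible_of_not_reachable [DecidableEq β] (hT : H.Realizes T f)
    {x y : ↥H.V ⊕ ↥H.E} (hxy : (H.bipRestrict ↑E').Adj x y)
    (hnr : ¬(T ⊓ H.bipRestrict ↑E').Reachable x y) :
    ∃ a ∈ H.E \ E', ∃ b ∈ E', H.TransferPossible f a b := by
  obtain ⟨v, e, he, hv, hxy⟩ := bipRestrict_adj.1 hxy
  have hnr' : ¬(T ⊓ H.bipRestrict ↑E').Reachable (.inl v) (.inr e) := by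
    rcases hxy with ⟨rfl, rfl⟩ | ⟨rfl, rfl⟩
    exacts [hnr, fun h => hnr h.symm]
  have hnadj : ¬T.Adj (.inl v) (.inr e) := fun h =>
    hnr' (Adj.reachable ⟨h, bipRestrict_adj.2 ⟨v, e, he, hv, .inl ⟨rfl, rfl⟩⟩⟩)
  obtain ⟨p, hp, -⟩ := hT.1.2.existsUnique_path (.inl v) (.inr e)
  obtain ⟨v', e', he', hmem⟩ := exists_mem_edges_of_not_reachable hT.1.1 p hnr'
  exact ⟨e', Finset.mem_sdiff.2 ⟨e'.2, he'⟩, e, he,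
    hT.transferPossible_of_mem_edges hv hnadj hp (by rintro rfl; exact he' he) hmem⟩

end Hypergraph'

/-- inequality (2) can be made sharp on any given nonempty `E'`, and if
it is not sharp at a hypertree `f`, then `f` admits a transfer of valence from outside
`E'` into `E'`. -/
theorem sharp_and_transfer (H : Hypergraph' α β) (hconn : H.Bip.Connected) :
    (∀ E' : Finset β, E' ⊆ H.E → E'.Nonempty →
      ∃ f : β → ℕ, H.IsHypertree f ∧ (∑ e ∈ E', (f e : ℤ)) = H.mu E') ∧
    (∀ f : β → ℕ, H.IsHypertree f →
      ∀ E' : Finset β, E' ⊆ H.E → E'.Nonempty →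
      (∑ e ∈ E', (f e : ℤ)) < H.mu E' →
      ∃ a ∈ H.E \ E', ∃ b ∈ E', H.TransferPossible f a b) := by
  refine ⟨fun E' hE' _ => ?_, fun f ⟨T, hT⟩ E' hE' _ hlt => ?_⟩
  · obtain ⟨T, hT, hreach⟩ := H.exists_isSpanningTree_reachable_inf_eq hconn ↑E'
    obtain ⟨f, hf⟩ := hT.exists_realizes
    have key := hf.sum_add_card_connectedComponent hE'
    rw [card_connectedComponent_eq_of_reachable_eq hreach] at key
    exact ⟨f, ⟨T, hf⟩, by linarith⟩
  · have key := hT.sum_add_card_connectedComponent hE'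
    obtain ⟨x, y, hxy, hnr⟩ := exists_adj_not_reachable_of_card_lt inf_le_right
      (by linarith : Nat.card (H.bipRestrict ↑E').ConnectedComponent <
        Nat.card (T ⊓ H.bipRestrict ↑E').ConnectedComponent)
    exact hT.exists_transferPossible_of_not_reachable hxy hnr
end
end
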